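/- For a dual-containing CSS code with full-rank H satisfying HH^T = 0 and 2·rank(H) < n, the operator Ω = (1/3)[M_X + M_Z + M_Y] (with M_X, M_Z, M_Y as above, and code-space projector Π_DC = M_X M_Z) satisfies λ_max((I−Π_DC)Ω(I−Π_DC)) = 1/3; hence its spectral gap equals 2/3. -/

import Mathlib

/-- The `n`-qubit Pauli operator `X^c = ⊗ᵢ X^{cᵢ}`: `X^c |t⟩ = |t + c⟩`. -/
def Xop {n : ℕ} (c : Fin n → ZMod 2) :
    Matrix (Fin n → ZMod 2) (Fin n → ZMod 2) ℂ :=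
  Matrix.of fun s t => if s = t + c then 1 else 0

/-- The `n`-qubit Pauli operator `Z^c = ⊗ᵢ Z^{cᵢ}`: `Z^c |t⟩ = (−1)^{c·t} |t⟩`. -/
def Zop {n : ℕ} (c : Fin n → ZMod 2) :
    Matrix (Fin n → ZMod 2) (Fin n → ZMod 2) ℂ :=
  Matrix.of fun s t => if s = t then (-1 : ℂ) ^ (∑ i, (c i * t i).val) else 0

namespace XYZGap
open Matrix

lemma sgn_add (x y : ZMod 2) : (-1:ℂ)^((x+y).val) = (-1)^x.val * (-1)^y.val := by
  have h0 : ZMod.val (0 : ZMod 2) = 0 := rfl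
  have h1 : ZMod.val (1 : ZMod 2) = 1 := rfl
  have h2 : ZMod.val (1 + 1 : ZMod 2) = 0 := rfl
  obtain rfl | rfl : x = 0 ∨ x = 1 := by revert x; decide
  all_goals obtain rfl | rfl : y = 0 ∨ y = 1 := by revert y; decide
  all_goals simp [h0, h1, h2]

lemma sgn_val_sum {ι : Type*} (s : Finset ι) (f : ι → ZMod 2) :
    (-1:ℂ)^((∑ i ∈ s, f i).val) = (-1)^(∑ i ∈ s, (f i).val) := by
  classical
  induction s using Finset.cons_induction with
  | empty => simp
  | cons a s ha ih =>
      rw [Finset.sum_cons, Finset.sum_cons, sgn_add, ih, pow_add]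

lemma sgn_sum {n : ℕ} (f g : Fin n → ZMod 2) :
    (-1:ℂ)^(∑ i, (f i + g i).val) = (-1)^(∑ i, (f i).val) * (-1)^(∑ i, (g i).val) := by
  rw [← Finset.prod_pow_eq_pow_sum, ← Finset.prod_pow_eq_pow_sum, ← Finset.prod_pow_eq_pow_sum,
    ← Finset.prod_mul_distrib]
  exact Finset.prod_congr rfl fun i _ => sgn_add (f i) (g i)

variable {n : ℕ}

lemma Xop_mul (a b : Fin n → ZMod 2) : Xop a * Xop b = Xop (a + b) := by
  ext s t
  rw [Matrix.mul_apply]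
  have key : ∀ u, (if s = u + a then (1:ℂ) else 0) * (if u = t + b then 1 else 0)
      = if u = t + b then (if s = u + a then (1:ℂ) else 0) else 0 := by
    intro u; split_ifs <;> simp
  simp only [Xop, Matrix.of_apply]
  rw [Finset.sum_congr rfl (fun u _ => key u), Finset.sum_ite_eq' _ (t + b), if_pos (Finset.mem_univ _)]
  rw [add_assoc, add_comm b a]

lemma Xop_zero : (Xop (0 : Fin n → ZMod 2)) = 1 := by
  ext s t
  simp [Xop, Matrix.one_apply, eq_comm]

lemma Xop_sq (a : Fin n → ZMod 2) : Xop a * Xop a = 1 := by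
  rw [Xop_mul]
  have : a + a = 0 := by
    funext i; exact CharTwo.add_self_eq_zero (a i)
  rw [this, Xop_zero]

lemma Zop_mul (a b : Fin n → ZMod 2) : Zop a * Zop b = Zop (a + b) := by
  ext s t
  rw [Matrix.mul_apply]
  have key : ∀ u, (Zop a s u) * (Zop b u t) = if u = t then (Zop a s u) * (Zop b u t) else 0 := by
    intro u
    by_cases h : u = t
    · rw [if_pos h]
    · rw [if_neg h]; simp [Zop, h]
  rw [Finset.sum_congr rfl (fun u _ => key u), Finset.sum_ite_eq' _ t, if_pos (Finset.mem_univ _)]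
  simp only [Zop, Matrix.of_apply]
  by_cases h : s = t
  · simp only [if_pos h, if_true]
    have e : (∑ i, ((a + b) i * t i).val) = ∑ i, (a i * t i + b i * t i).val :=
      Finset.sum_congr rfl fun i _ => by rw [Pi.add_apply, add_mul]
    rw [e, sgn_sum]
  · simp [h]

lemma Zop_sq (a : Fin n → ZMod 2) : Zop a * Zop a = 1 := by
  rw [Zop_mul]
  have : a + a = 0 := by funext i; exact CharTwo.add_self_eq_zero (a i)
  rw [this]
  ext s t
  simp [Zop, Matrix.one_apply]

lemma Xop_mul_Zop (a b : Fin n → ZMod 2) :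
    Xop a * Zop b = Matrix.of fun s t => if s = t + a then (-1:ℂ)^(∑ i, (b i * t i).val) else 0 := by
  ext s t
  rw [Matrix.mul_apply]
  have key : ∀ u, (Xop a s u) * (Zop b u t) = if u = t then (Xop a s u) * (Zop b u t) else 0 := by
    intro u
    by_cases h : u = t
    · rw [if_pos h]
    · rw [if_neg h]; simp [Zop, h]
  rw [Finset.sum_congr rfl (fun u _ => key u), Finset.sum_ite_eq' _ t, if_pos (Finset.mem_univ _)]
  simp [Xop, Zop]

lemma Zop_mul_Xop (a b : Fin n → ZMod 2) :
    Zop b * Xop a = Matrix.of fun s t => if s = t + a then (-1:ℂ)^(∑ i, (b i * (t + a) i).val) else 0 := by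
  ext s t
  rw [Matrix.mul_apply]
  have key : ∀ u, (Zop b s u) * (Xop a u t) = if u = s then (Zop b s u) * (Xop a u t) else 0 := by
    intro u
    by_cases h : u = s
    · rw [if_pos h]
    · rw [if_neg h]; simp [Zop, Ne.symm h]
  rw [Finset.sum_congr rfl (fun u _ => key u), Finset.sum_ite_eq' _ s, if_pos (Finset.mem_univ _)]
  simp only [Xop, Zop, Matrix.of_apply, if_pos rfl, one_mul]
  by_cases h : s = t + a
  · simp [h]
  · simp [h]

lemma Xop_Zop_comm (a b : Fin n → ZMod 2) (h : ∑ i, b i * a i = 0) :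
    Commute (Xop a) (Zop b) := by
  unfold Commute SemiconjBy
  rw [Xop_mul_Zop, Zop_mul_Xop]
  ext s t
  simp only [Matrix.of_apply]
  by_cases hst : s = t + a
  · simp only [if_pos hst]
    have e : (∑ i, (b i * (t + a) i).val) = ∑ i, (b i * t i + b i * a i).val :=
      Finset.sum_congr rfl fun i _ => by rw [Pi.add_apply, mul_add]
    have hz : (-1:ℂ)^(∑ i, (b i * a i).val) = 1 := by
      rw [← sgn_val_sum, h, ZMod.val_zero, pow_zero]
    rw [e, sgn_sum, hz, mul_one]
  · simp [hst]

lemma exists_of_mem_ofFn {α : Type*} {m : ℕ} {f : Fin m → α} {x : α}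
    (h : x ∈ List.ofFn f) : ∃ a, f a = x := by
  simpa [Set.mem_range] using List.mem_ofFn.mp h

section ListLemmas
variable {R : Type*} [Ring R]

lemma prod_idem_of_comm (l : List R) (hc : ∀ P ∈ l, ∀ Q ∈ l, Commute P Q)
    (hi : ∀ P ∈ l, P * P = P) : l.prod * l.prod = l.prod := by
  induction l with
  | nil => simp
  | cons h t ih =>
      have hcomm : Commute h t.prod :=
        Commute.list_prod_right _ _ fun x hx =>
          hc h (List.mem_cons_self) x (List.mem_cons_of_mem h hx)
      have iht : t.prod * t.prod = t.prod :=
        ih (fun P hP Q hQ => hc P (List.mem_cons_of_mem h hP) Q (List.mem_cons_of_mem h hQ))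
          (fun P hP => hi P (List.mem_cons_of_mem h hP))
      simp only [List.prod_cons]
      calc h * t.prod * (h * t.prod) = h * (t.prod * h) * t.prod := by noncomm_ring
        _ = h * (h * t.prod) * t.prod := by rw [hcomm.symm.eq]
        _ = (h * h) * (t.prod * t.prod) := by noncomm_ring
        _ = h * t.prod := by rw [hi h (List.mem_cons_self), iht]

lemma prod_absorb (l : List R) (X P : R) (hc : ∀ M ∈ l, Commute X M)
    (hP : P ∈ l) (habs : P * X = P) : l.prod * X = l.prod := by
  induction l with
  | nil => simp at hP
  | cons h t ih =>
      simp only [List.prod_cons]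
      rcases List.mem_cons.mp hP with rfl | hPt
      · have hcomm : Commute X t.prod :=
          Commute.list_prod_right _ _ fun x hx => hc x (List.mem_cons_of_mem _ hx)
        rw [mul_assoc, ← hcomm.eq, ← mul_assoc, habs]
      · rw [mul_assoc, ih (fun M hM => hc M (List.mem_cons_of_mem _ hM)) hPt]

lemma prod_map_swap {ι : Type*} (l : List ι) (M : R) (f g : ι → R)
    (h : ∀ a ∈ l, M * f a = g a * M) : M * (l.map f).prod = (l.map g).prod * M := by
  induction l with
  | nil => simp
  | cons a t ih =>
      simp only [List.map_cons, List.prod_cons]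
      rw [← mul_assoc, h a (List.mem_cons_self), mul_assoc,
        ih (fun b hb => h b (List.mem_cons_of_mem _ hb)), ← mul_assoc]

end ListLemmas

section VecLemmas
variable {m : Type*} [Fintype m] [DecidableEq m]

lemma list_prod_mulVec_eig (l : List (Matrix m m ℂ)) (v : m → ℂ)
    (h : ∀ M ∈ l, ∃ μ : ℂ, M *ᵥ v = μ • v) : ∃ μ : ℂ, l.prod *ᵥ v = μ • v := by
  induction l with
  | nil => exact ⟨1, by simp⟩
  | cons M t ih =>
      obtain ⟨μt, hμt⟩ := ih fun N hN => h N (List.mem_cons_of_mem _ hN)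
      obtain ⟨μ, hμ⟩ := h M (List.mem_cons_self)
      refine ⟨μt * μ, ?_⟩
      rw [List.prod_cons, ← Matrix.mulVec_mulVec, hμt, Matrix.mulVec_smul, hμ, smul_smul]

lemma list_prod_mulVec_zero (l : List (Matrix m m ℂ)) (v : m → ℂ)
    (h : ∀ M ∈ l, ∃ μ : ℂ, M *ᵥ v = μ • v) (h0 : ∃ M ∈ l, M *ᵥ v = 0) :
    l.prod *ᵥ v = 0 := by
  induction l with
  | nil => simp at h0
  | cons M t ih =>
      rw [List.prod_cons, ← Matrix.mulVec_mulVec]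
      obtain ⟨N, hN, hN0⟩ := h0
      rcases List.mem_cons.mp hN with rfl | hNt
      · obtain ⟨μt, hμt⟩ := list_prod_mulVec_eig t v fun P hP => h P (List.mem_cons_of_mem _ hP)
        rw [hμt, Matrix.mulVec_smul, hN0, smul_zero]
      · rw [ih (fun P hP => h P (List.mem_cons_of_mem _ hP)) ⟨N, hNt, hN0⟩, Matrix.mulVec_zero]

/-- Entrywise nonnegative real matrices with positive diagonal. -/
def PosMat (M : Matrix m m ℂ) : Prop :=
  (∀ s t, (M s t).im = 0 ∧ 0 ≤ (M s t).re) ∧ ∀ s, 0 < (M s s).re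

lemma PosMat.one : PosMat (1 : Matrix m m ℂ) := by
  constructor
  · intro s t; by_cases h : s = t <;> simp [Matrix.one_apply, h]
  · intro s; simp [Matrix.one_apply]

lemma PosMat.mul {M N : Matrix m m ℂ} (hM : PosMat M) (hN : PosMat N) : PosMat (M * N) := by
  have him : ∀ s t, ((M * N) s t).im = 0 := by
    intro s t
    rw [Matrix.mul_apply, Complex.im_sum]
    refine Finset.sum_eq_zero fun u _ => ?_
    rw [Complex.mul_im, (hM.1 s u).1, (hN.1 u t).1]; ring
  have hre : ∀ s t, ((M * N) s t).re = ∑ u, (M s u).re * (N u t).re := by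
    intro s t
    rw [Matrix.mul_apply, Complex.re_sum]
    refine Finset.sum_congr rfl fun u _ => ?_
    rw [Complex.mul_re, (hM.1 s u).1, (hN.1 u t).1]; ring
  refine ⟨fun s t => ⟨him s t, ?_⟩, fun s => ?_⟩
  · rw [hre]
    exact Finset.sum_nonneg fun u _ => mul_nonneg (hM.1 s u).2 (hN.1 u t).2
  · rw [hre]
    calc (0:ℝ) < (M s s).re * (N s s).re := mul_pos (hM.2 s) (hN.2 s)
      _ ≤ ∑ u, (M s u).re * (N u s).re :=
        Finset.single_le_sum (fun u _ => mul_nonneg (hM.1 s u).2 (hN.1 u s).2)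
          (Finset.mem_univ s)

lemma PosMat.list_prod (l : List (Matrix m m ℂ)) (h : ∀ M ∈ l, PosMat M) :
    PosMat l.prod := by
  induction l with
  | nil => simpa using PosMat.one
  | cons M t ih =>
      rw [List.prod_cons]
      exact (h M (List.mem_cons_self)).mul (ih fun N hN => h N (List.mem_cons_of_mem _ hN))


lemma posMat_factor {n : ℕ} (c : Fin n → ZMod 2) :
    PosMat ((2:ℂ)⁻¹ • (1 + Xop c)) := by
  have hent : ∀ s t, ((2:ℂ)⁻¹ • (1 + Xop c)) s t
      = (((2:ℝ)⁻¹ * ((if s = t then 1 else 0) + (if s = t + c then 1 else 0)) : ℝ) : ℂ) := by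
    intro s t
    simp only [Matrix.smul_apply, Matrix.add_apply, Matrix.one_apply, Xop, Matrix.of_apply,
      smul_eq_mul]
    split_ifs <;> norm_num
  constructor
  · intro s t
    rw [hent]
    refine ⟨Complex.ofReal_im _, ?_⟩
    rw [Complex.ofReal_re]
    split_ifs <;> norm_num
  · intro s
    rw [hent, Complex.ofReal_re, if_pos rfl]
    split_ifs <;> norm_num

end VecLemmas

end XYZGap

open Matrix XYZGap in
set_option maxHeartbeats 1000000 in
/-- For a dual-containing CSS code with full-rank `H` satisfying
`HHᵀ = 0`, `k_X ≥ 1` and `2·k_X < n`, the XYZ verification operator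
`Ω = (M_X + M_Z + M_Y)/3` (with `M_X = ∏_c(1+X^c)/2`, `M_Z = ∏_c(1+Z^c)/2`,
`M_Y = ∏_c(1+X^cZ^c)/2`, and code-space projector `Π_DC = M_X M_Z`) satisfies
`λ_max((1−Π_DC)Ω(1−Π_DC)) = 1/3`; hence its spectral gap equals `2/3`. -/
theorem dual_containing_xyz_spectral_gap {n kX : ℕ}
    (hkX : 0 < kX) (hkn : 2 * kX < n)
    (H : Fin kX → (Fin n → ZMod 2))
    (hrank : LinearIndependent (ZMod 2) H)
    (hself : ∀ a b, ∑ i, H a i * H b i = 0)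
    (MX MZ MY PiDC Ω : Matrix (Fin n → ZMod 2) (Fin n → ZMod 2) ℂ)
    (hMX : MX = (List.ofFn fun a => (2 : ℂ)⁻¹ • (1 + Xop (H a))).prod)
    (hMZ : MZ = (List.ofFn fun a => (2 : ℂ)⁻¹ • (1 + Zop (H a))).prod)
    (hMY : MY = (List.ofFn fun a => (2 : ℂ)⁻¹ • (1 + Xop (H a) * Zop (H a))).prod)
    (hPi : PiDC = MX * MZ)
    (hΩ : Ω = (3 : ℂ)⁻¹ • (MX + MZ + MY))
    (hherm' : ((1 - PiDC) * Ω * (1 - PiDC)).IsHermitian) :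
    (⨆ i, hherm'.eigenvalues i) = 1 / 3 ∧
      1 - (⨆ i, hherm'.eigenvalues i) = 2 / 3 := by
  classical
  set P : Fin kX → Matrix (Fin n → ZMod 2) (Fin n → ZMod 2) ℂ :=
    fun a => (2 : ℂ)⁻¹ • (1 + Xop (H a)) with hPdef
  set Q : Fin kX → Matrix (Fin n → ZMod 2) (Fin n → ZMod 2) ℂ :=
    fun a => (2 : ℂ)⁻¹ • (1 + Zop (H a)) with hQdef
  set R : Fin kX → Matrix (Fin n → ZMod 2) (Fin n → ZMod 2) ℂ :=
    fun a => (2 : ℂ)⁻¹ • (1 + Xop (H a) * Zop (H a)) with hRdef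
  -- basic commutation between generators
  have hcXX : ∀ a b, Commute (Xop (H a)) (Xop (H b)) := by
    intro a b
    unfold Commute SemiconjBy
    rw [Xop_mul, Xop_mul, add_comm]
  have hcZZ : ∀ a b, Commute (Zop (H a)) (Zop (H b)) := by
    intro a b
    unfold Commute SemiconjBy
    rw [Zop_mul, Zop_mul, add_comm]
  have hcXZ : ∀ a b, Commute (Xop (H a)) (Zop (H b)) :=
    fun a b => Xop_Zop_comm _ _ (hself b a)
  -- squares of generators
  have hX2 : ∀ a, Xop (H a) * Xop (H a) = 1 := fun a => Xop_sq _
  have hZ2 : ∀ a, Zop (H a) * Zop (H a) = 1 := fun a => Zop_sq _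
  have hXZ2 : ∀ a, (Xop (H a) * Zop (H a)) * (Xop (H a) * Zop (H a)) = 1 := by
    intro a
    calc (Xop (H a) * Zop (H a)) * (Xop (H a) * Zop (H a))
        = Xop (H a) * (Zop (H a) * Xop (H a)) * Zop (H a) := by noncomm_ring
      _ = Xop (H a) * (Xop (H a) * Zop (H a)) * Zop (H a) := by rw [(hcXZ a a).eq]
      _ = (Xop (H a) * Xop (H a)) * (Zop (H a) * Zop (H a)) := by noncomm_ring
      _ = 1 := by rw [hX2, hZ2, one_mul]
  have hcRgen : ∀ a b, Commute (Xop (H a) * Zop (H a)) (Xop (H b) * Zop (H b)) := by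
    intro a b
    exact Commute.mul_left
      ((hcXX a b).mul_right (hcXZ a b))
      (((hcXZ b a).symm).mul_right (hcZZ a b))
  -- commutation between factors
  have comm_factor : ∀ (A B : Matrix (Fin n → ZMod 2) (Fin n → ZMod 2) ℂ), Commute A B →
      Commute ((2:ℂ)⁻¹ • (1 + A)) ((2:ℂ)⁻¹ • (1 + B)) := by
    intro A B h
    have h1 : Commute (1 + A) (1 + B) :=
      (Commute.one_right (1+A)).add_right ((Commute.one_left B).add_left h)
    exact (h1.smul_left _).smul_right _
  have hcPP : ∀ a b, Commute (P a) (P b) := fun a b => comm_factor _ _ (hcXX a b)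
  have hcQQ : ∀ a b, Commute (Q a) (Q b) := fun a b => comm_factor _ _ (hcZZ a b)
  have hcRR : ∀ a b, Commute (R a) (R b) := fun a b => comm_factor _ _ (hcRgen a b)
  have hcPQ : ∀ a b, Commute (P a) (Q b) := fun a b => comm_factor _ _ (hcXZ a b)
  have hcPR : ∀ a b, Commute (P a) (R b) := fun a b =>
    comm_factor _ _ ((hcXX a b).mul_right (hcXZ a b))
  have hcQR : ∀ a b, Commute (Q a) (R b) := fun a b =>
    comm_factor _ _ (((hcXZ b a).symm).mul_right (hcZZ a b))
  -- commutation of products with factors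
  have hcMXQ : ∀ b, Commute MX (Q b) := by
    intro b; rw [hMX]
    refine (Commute.list_prod_right _ _ fun x hx => ?_).symm
    obtain ⟨a, rfl⟩ := exists_of_mem_ofFn hx
    exact (hcPQ a b).symm
  have hcMZP : ∀ b, Commute MZ (P b) := by
    intro b; rw [hMZ]
    refine (Commute.list_prod_right _ _ fun x hx => ?_).symm
    obtain ⟨a, rfl⟩ := exists_of_mem_ofFn hx
    exact (hcPQ b a)
  have hcMXMZ : Commute MX MZ := by
    rw [hMZ]
    refine Commute.list_prod_right _ _ fun x hx => ?_
    obtain ⟨a, rfl⟩ := exists_of_mem_ofFn hx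
    exact (hcMXQ a)
  have hcMXMY : Commute MX MY := by
    rw [hMY, hMX]
    refine Commute.list_prod_right _ _ fun x hx => ?_
    obtain ⟨b, rfl⟩ := exists_of_mem_ofFn hx
    refine (Commute.list_prod_right _ _ fun y hy => ?_).symm
    obtain ⟨a, rfl⟩ := exists_of_mem_ofFn hy
    exact (hcPR a b).symm
  have hcMZMY : Commute MZ MY := by
    rw [hMY, hMZ]
    refine Commute.list_prod_right _ _ fun x hx => ?_
    obtain ⟨b, rfl⟩ := exists_of_mem_ofFn hx
    refine (Commute.list_prod_right _ _ fun y hy => ?_).symm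
    obtain ⟨a, rfl⟩ := exists_of_mem_ofFn hy
    exact (hcQR a b).symm
  -- idempotence of the factors
  have hP2 : ∀ a, P a * P a = P a := by
    intro a
    have key : (1 + Xop (H a)) * (1 + Xop (H a)) = (2:ℂ) • (1 + Xop (H a)) := by
      rw [mul_add, mul_one, add_mul, one_mul, hX2]
      module
    rw [hPdef]
    simp only
    rw [smul_mul_assoc, mul_smul_comm, key, smul_smul, smul_smul]
    norm_num
  have hQ2 : ∀ a, Q a * Q a = Q a := by
    intro a
    have key : (1 + Zop (H a)) * (1 + Zop (H a)) = (2:ℂ) • (1 + Zop (H a)) := by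
      rw [mul_add, mul_one, add_mul, one_mul, hZ2]
      module
    rw [hQdef]
    simp only
    rw [smul_mul_assoc, mul_smul_comm, key, smul_smul, smul_smul]
    norm_num
  have hR2 : ∀ a, R a * R a = R a := by
    intro a
    have key : (1 + Xop (H a) * Zop (H a)) * (1 + Xop (H a) * Zop (H a))
        = (2:ℂ) • (1 + Xop (H a) * Zop (H a)) := by
      rw [mul_add, mul_one, add_mul, one_mul, hXZ2]
      module
    rw [hRdef]
    simp only
    rw [smul_mul_assoc, mul_smul_comm, key, smul_smul, smul_smul]
    norm_num
  -- idempotence of the products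
  have e1 : MX * MX = MX := by
    rw [hMX]
    refine prod_idem_of_comm _ ?_ ?_
    · intro x hx y hy
      obtain ⟨a, rfl⟩ := exists_of_mem_ofFn hx
      obtain ⟨b, rfl⟩ := exists_of_mem_ofFn hy
      exact hcPP a b
    · intro x hx
      obtain ⟨a, rfl⟩ := exists_of_mem_ofFn hx
      exact hP2 a
  have e2 : MZ * MZ = MZ := by
    rw [hMZ]
    refine prod_idem_of_comm _ ?_ ?_
    · intro x hx y hy
      obtain ⟨a, rfl⟩ := exists_of_mem_ofFn hx
      obtain ⟨b, rfl⟩ := exists_of_mem_ofFn hy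
      exact hcQQ a b
    · intro x hx
      obtain ⟨a, rfl⟩ := exists_of_mem_ofFn hx
      exact hQ2 a
  have e3 : MY * MY = MY := by
    rw [hMY]
    refine prod_idem_of_comm _ ?_ ?_
    · intro x hx y hy
      obtain ⟨a, rfl⟩ := exists_of_mem_ofFn hx
      obtain ⟨b, rfl⟩ := exists_of_mem_ofFn hy
      exact hcRR a b
    · intro x hx
      obtain ⟨a, rfl⟩ := exists_of_mem_ofFn hx
      exact hR2 a
  -- absorption
  have hMXabs : ∀ a, MX * Xop (H a) = MX := by
    intro a
    rw [hMX]
    refine prod_absorb _ (Xop (H a)) (P a) ?_ (List.mem_ofFn.mpr ⟨a, rfl⟩) ?_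
    · intro M hM
      obtain ⟨b, rfl⟩ := exists_of_mem_ofFn hM
      exact ((Commute.one_right (Xop (H a))).add_right (hcXX a b)).smul_right _
    · rw [hPdef]
      simp only
      rw [smul_mul_assoc, add_mul, one_mul, hX2, add_comm]
  have hMZabs : ∀ a, MZ * Zop (H a) = MZ := by
    intro a
    rw [hMZ]
    refine prod_absorb _ (Zop (H a)) (Q a) ?_ (List.mem_ofFn.mpr ⟨a, rfl⟩) ?_
    · intro M hM
      obtain ⟨b, rfl⟩ := exists_of_mem_ofFn hM
      exact ((Commute.one_right (Zop (H a))).add_right (hcZZ b a).symm).smul_right _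
    · rw [hQdef]
      simp only
      rw [smul_mul_assoc, add_mul, one_mul, hZ2, add_comm]
  -- swap relations
  have hMXR : ∀ a, MX * R a = Q a * MX := by
    intro a
    have h1 : MX * (Xop (H a) * Zop (H a)) = MX * Zop (H a) := by
      rw [← mul_assoc, hMXabs]
    have : MX * R a = MX * Q a := by
      rw [hRdef, hQdef]
      simp only
      rw [mul_smul_comm, mul_smul_comm, mul_add, mul_add, mul_one, h1]
    rw [this, (hcMXQ a).eq]
  have hcMZX : ∀ a, Commute MZ (Xop (H a)) := by
    intro a; rw [hMZ]
    refine (Commute.list_prod_right _ _ fun x hx => ?_).symm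
    obtain ⟨b, rfl⟩ := exists_of_mem_ofFn hx
    exact (((Commute.one_right (Xop (H a))).add_right (hcXZ a b)).smul_right
      ((2:ℂ)⁻¹) : Commute (Xop (H a)) ((2:ℂ)⁻¹ • (1 + Zop (H b))))
  have hMZR : ∀ a, MZ * R a = P a * MZ := by
    intro a
    have h1 : MZ * (Xop (H a) * Zop (H a)) = Xop (H a) * MZ := by
      rw [← mul_assoc, (hcMZX a).eq, mul_assoc, hMZabs]
    rw [hRdef, hPdef]
    simp only
    rw [mul_smul_comm, mul_add, mul_one, h1, smul_mul_assoc, add_mul, one_mul]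
  -- the key product identities
  have hMXMY : MX * MY = MZ * MX := by
    rw [hMY, hMZ, List.ofFn_eq_map, List.ofFn_eq_map]
    exact prod_map_swap _ MX R Q fun a _ => hMXR a
  have hMZMY : MZ * MY = MX * MZ := by
    rw [hMY, hMX, List.ofFn_eq_map, List.ofFn_eq_map]
    exact prod_map_swap _ MZ R P fun a _ => hMZR a
  have e4 : MX * MZ = PiDC := hPi.symm
  have e5 : MZ * MX = PiDC := hcMXMZ.symm.eq.trans e4
  have e6 : MX * MY = PiDC := hMXMY.trans e5
  have e7 : MY * MX = PiDC := hcMXMY.symm.eq.trans e6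
  have e8 : MZ * MY = PiDC := hMZMY.trans e4
  have e9 : MY * MZ = PiDC := hcMZMY.symm.eq.trans e8
  -- PiDC absorption
  have pXPi : MX * PiDC = PiDC := by rw [hPi, ← mul_assoc, e1]
  have pZPi : MZ * PiDC = PiDC := by rw [hPi, ← mul_assoc, e5, hPi, mul_assoc, e2]
  have pYPi : MY * PiDC = PiDC := by rw [hPi, ← mul_assoc, e7, hPi, mul_assoc, e2]
  have pPiX : PiDC * MX = PiDC := by rw [hPi, mul_assoc, e5, pXPi]; exact hPi
  have pPiZ : PiDC * MZ = PiDC := by rw [hPi, mul_assoc, e2]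
  have pPiY : PiDC * MY = PiDC := by rw [hPi, mul_assoc, e8, pXPi]; exact hPi
  have pPiPi : PiDC * PiDC = PiDC := by rw [hPi, ← mul_assoc, mul_assoc MX MZ MX, e5, pXPi, pPiZ]; exact hPi
  -- Ω–PiDC relations
  have three_smul : PiDC + PiDC + PiDC = (3:ℂ) • PiDC := by module
  have hOmPi : Ω * PiDC = PiDC := by
    rw [hΩ, smul_mul_assoc, add_mul, add_mul, pXPi, pZPi, pYPi, three_smul, smul_smul]
    norm_num
  have hPiOm : PiDC * Ω = PiDC := by
    rw [hΩ, mul_smul_comm, mul_add, mul_add, pPiX, pPiZ, pPiY, three_smul, smul_smul]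
    norm_num
  have hAeq : (1 - PiDC) * Ω * (1 - PiDC) = Ω - PiDC := by
    calc (1 - PiDC) * Ω * (1 - PiDC) = (Ω - PiDC) * (1 - PiDC) := by
          rw [sub_mul, one_mul, hPiOm]
      _ = Ω - PiDC - (Ω * PiDC - PiDC * PiDC) := by rw [mul_sub, mul_one, sub_mul]
      _ = Ω - PiDC := by rw [hOmPi, pPiPi, sub_self, sub_zero]
  have hSS : (MX + MZ + MY) * (MX + MZ + MY) = (MX + MZ + MY) + (6:ℂ) • PiDC := by
    simp only [add_mul, mul_add, e1, e2, e3, e4, e5, e6, e7, e8, e9]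
    module
  have hOmOm : Ω * Ω = (3:ℂ)⁻¹ • ((3:ℂ)⁻¹ • ((MX + MZ + MY) + (6:ℂ) • PiDC)) := by
    rw [hΩ, smul_mul_assoc, mul_smul_comm, hSS]
  have hA2 : (Ω - PiDC) * (Ω - PiDC) = (3:ℂ)⁻¹ • (Ω - PiDC) := by
    rw [sub_mul, mul_sub, mul_sub, hOmPi, hPiOm, pPiPi, hOmOm, hΩ]
    module
  -- the operator under study
  set A := (1 - PiDC) * Ω * (1 - PiDC) with hAdef
  have hAA : A * A = (3:ℂ)⁻¹ • A := by rw [hAeq]; exact hA2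
  -- eigenvalue dichotomy
  have hdich : ∀ i, hherm'.eigenvalues i = 0 ∨ hherm'.eigenvalues i = 1/3 := by
    intro i
    have hv := hherm'.mulVec_eigenvectorBasis i
    set μ := hherm'.eigenvalues i with hμdef
    set v := ⇑(hherm'.eigenvectorBasis i) with hvdef
    have hvne : v ≠ 0 := by
      intro h0
      have hb0 : hherm'.eigenvectorBasis i = 0 := (WithLp.ofLp_eq_zero _).mp h0
      have hnorm := (hherm'.eigenvectorBasis).orthonormal.1 i
      rw [hb0] at hnorm
      simp at hnorm
    obtain ⟨j, hj⟩ := Function.ne_iff.mp hvne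
    have h1 : (A * A) *ᵥ v = (μ * μ) • v := by
      rw [← Matrix.mulVec_mulVec, hv, Matrix.mulVec_smul, hv, smul_smul]
    rw [hAA, Matrix.smul_mulVec, hv] at h1
    have hcoord := congrFun h1 j
    simp only [Pi.smul_apply, Complex.real_smul, smul_eq_mul, Complex.ofReal_mul] at hcoord
    have hμeq : (μ:ℂ) * μ = 3⁻¹ * μ := by
      have := mul_right_cancel₀ hj (by linear_combination -hcoord :
        ((μ:ℂ) * μ) * v j = ((3:ℂ)⁻¹ * μ) * v j)
      exact this
    have hfac : (μ:ℂ) * (μ - 3⁻¹) = 0 := by linear_combination hμeq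
    rcases mul_eq_zero.mp hfac with h | h
    · left; exact_mod_cast h
    · right
      have h'' : (μ:ℂ) = ((3⁻¹:ℝ):ℂ) := by rw [sub_eq_zero.mp h]; norm_num
      rw [Complex.ofReal_inj.mp h'']; norm_num
  -- a nonzero vector with eigenvalue 1/3
  obtain ⟨i0, hi0⟩ := Function.ne_iff.mp (hrank.ne_zero ⟨0, hkX⟩)
  set a0 : Fin kX := ⟨0, hkX⟩ with ha0
  set t0 : Fin n → ZMod 2 := Pi.single i0 1 with ht0
  set e0 : (Fin n → ZMod 2) → ℂ := Pi.single t0 1 with he0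
  have hZe : ∀ c : Fin n → ZMod 2,
      Zop c *ᵥ e0 = ((-1:ℂ)^(∑ i, (c i * t0 i).val)) • e0 := by
    intro c
    rw [he0, Matrix.mulVec_single]
    funext s
    by_cases hs : s = t0 <;> simp [Zop, Pi.single_apply, hs]
  have hQev : ∀ a, Q a *ᵥ e0
      = ((2:ℂ)⁻¹ * (1 + (-1:ℂ)^(∑ i, (H a i * t0 i).val))) • e0 := by
    intro a
    rw [hQdef]
    simp only
    rw [Matrix.smul_mulVec, Matrix.add_mulVec, Matrix.one_mulVec, hZe]
    module
  have hsum0 : (∑ i, (H a0 i * t0 i).val) = 1 := by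
    have hone : H a0 i0 = 1 := by
      have key : ∀ x : ZMod 2, x ≠ 0 → x = 1 := by decide
      exact key _ hi0
    have hval : ∀ i, (H a0 i * t0 i).val = if i = i0 then 1 else 0 := by
      intro i
      rw [ht0, Pi.single_apply]
      by_cases h : i = i0
      · subst h; rw [if_pos rfl, if_pos rfl, mul_one, hone]; rfl
      · rw [if_neg h, if_neg h, mul_zero]; rfl
    rw [Finset.sum_congr rfl fun i _ => hval i, Finset.sum_ite_eq' Finset.univ i0 (fun _ => 1),
      if_pos (Finset.mem_univ _)]
  have hMZe : MZ *ᵥ e0 = 0 := by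
    rw [hMZ]
    apply list_prod_mulVec_zero
    · intro M hM
      obtain ⟨a, rfl⟩ := exists_of_mem_ofFn hM
      exact ⟨_, hQev a⟩
    · refine ⟨Q a0, List.mem_ofFn.mpr ⟨a0, rfl⟩, ?_⟩
      rw [hQev a0, hsum0]
      norm_num
  set v0 := MX *ᵥ e0 with hv0
  have hMXv0 : MX *ᵥ v0 = v0 := by rw [hv0, Matrix.mulVec_mulVec, e1]
  have hMZv0 : MZ *ᵥ v0 = 0 := by
    rw [hv0, Matrix.mulVec_mulVec, e5, hPi, ← Matrix.mulVec_mulVec, hMZe, Matrix.mulVec_zero]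
  have hMYv0 : MY *ᵥ v0 = 0 := by
    rw [hv0, Matrix.mulVec_mulVec, e7, hPi, ← Matrix.mulVec_mulVec, hMZe, Matrix.mulVec_zero]
  have hPiv0 : PiDC *ᵥ v0 = 0 := by
    rw [hv0, Matrix.mulVec_mulVec, pPiX, hPi, ← Matrix.mulVec_mulVec, hMZe, Matrix.mulVec_zero]
  have hAv0 : A *ᵥ v0 = (3:ℂ)⁻¹ • v0 := by
    rw [hAeq, Matrix.sub_mulVec, hPiv0, sub_zero, hΩ, Matrix.smul_mulVec,
      Matrix.add_mulVec, Matrix.add_mulVec, hMXv0, hMZv0, hMYv0, add_zero, add_zero]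
  have hv0ne : v0 ≠ 0 := by
    have hpos : PosMat MX := by
      rw [hMX]
      apply PosMat.list_prod
      intro M hM
      obtain ⟨a, rfl⟩ := exists_of_mem_ofFn hM
      exact posMat_factor (H a)
    intro h0
    have hvt : v0 t0 = MX t0 t0 := by
      rw [hv0, he0, Matrix.mulVec_single]
      exact mul_one _
    rw [h0] at hvt
    have := hpos.2 t0
    rw [← hvt] at this
    simp at this
  -- conclusion
  have hub : ∀ i, hherm'.eigenvalues i ≤ 1/3 := by
    intro i
    rcases hdich i with h | h <;> rw [h] <;> norm_num
  have hex : ∃ i, hherm'.eigenvalues i = 1/3 := by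
    by_contra hno
    push_neg at hno
    have hall : ∀ i, hherm'.eigenvalues i = 0 := fun i => (hdich i).resolve_right (hno i)
    have hA0 : A = 0 := by
      have hspec := hherm'.spectral_theorem
      have hdiag : (RCLike.ofReal ∘ hherm'.eigenvalues : _ → ℂ) = fun _ => 0 :=
        funext fun i => by rw [Function.comp_apply, hall i]; simp
      rw [hdiag] at hspec
      simpa using hspec
    rw [hA0, Matrix.zero_mulVec] at hAv0
    exact hv0ne (by
      have := hAv0.symm
      rwa [smul_eq_zero_iff_right (by norm_num : (3:ℂ)⁻¹ ≠ 0)] at this)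
  have hsup : (⨆ i, hherm'.eigenvalues i) = 1/3 := by
    refine le_antisymm (ciSup_le hub) ?_
    obtain ⟨i, hi⟩ := hex
    calc (1:ℝ)/3 = hherm'.eigenvalues i := hi.symm
      _ ≤ ⨆ i, hherm'.eigenvalues i :=
          le_ciSup (Set.Finite.bddAbove (Set.finite_range _)) i
  exact ⟨hsup, by rw [hsup]; norm_num⟩
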